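/- Let Φ: D^b(X) → D^b(X) be the Fourier–Mukai transform on a principally polarized abelian threefold (X,L) of Picard rank 1 with kernel the Poincaré bundle, so that ch(Φ(E)) = (a₃, -a₂ℓ, a₁ℓ²/2, -a₀ℓ³/6) when ch(E) = (a₀, a₁ℓ, a₂ℓ²/2, a₃ℓ³/6). If Ψ = L∘Φ and Ψ̂ = Φ∘L^{-1}[1], then for all E ∈ D^b(X): Im Z(Ψ(E)) = -Im Z(E) and Im Z(Ψ̂(E)) = -Im Z(E), where Z = Z_{(√3/2)ℓ, ℓ/2}. -/
import Mathlib


/-!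
STATEMENT 1. (X,L) a principally polarized abelian threefold of Picard rank 1,
ℓ = c₁(L), ℓ³ = 6. Chern characters are recorded by their coordinates in the basis
(1, ℓ, ℓ²/2, ℓ³/6).  The Poincaré FMT Φ acts by (a₀,a₁,a₂,a₃) ↦ (a₃,-a₂,a₁,-a₀),
tensoring by L (resp. L⁻¹) by multiplication with e^ℓ (resp. e^{-ℓ}), and the shift
[1] by negation.  With ω = (√3/2)ℓ, B = ℓ/2 one has Im Z(E) = (3√3/4)(a₂-a₁).
Then for Ψ = L∘Φ and Ψ̂ = Φ∘L⁻¹[1]:  Im Z(Ψ(E)) = -Im Z(E) = Im Z(Ψ̂(E)).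
-/

noncomputable section

/-- `Im Z_{(√3/2)ℓ, ℓ/2}` in the coordinates `(a₀,a₁,a₂,a₃)`. -/
def ImZ (a : Fin 4 → ℝ) : ℝ := 3 * Real.sqrt 3 / 4 * (a 2 - a 1)

/-- Action of the Poincaré FMT `Φ` on Chern characters. -/
def chPhi (a : Fin 4 → ℝ) : Fin 4 → ℝ := ![a 3, -(a 2), a 1, -(a 0)]

/-- Action of `L ⊗ (−)` on Chern characters (multiplication by `e^ℓ`). -/
def chL (a : Fin 4 → ℝ) : Fin 4 → ℝ :=
  ![a 0, a 1 + a 0, a 2 + 2 * a 1 + a 0, a 3 + 3 * a 2 + 3 * a 1 + a 0]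

/-- Action of `L⁻¹ ⊗ (−)` on Chern characters (multiplication by `e^{-ℓ}`). -/
def chLinv (a : Fin 4 → ℝ) : Fin 4 → ℝ :=
  ![a 0, a 1 - a 0, a 2 - 2 * a 1 + a 0, a 3 - 3 * a 2 + 3 * a 1 - a 0]

/-- Action of `Ψ = L ∘ Φ` on Chern characters. -/
def chPsi (a : Fin 4 → ℝ) : Fin 4 → ℝ := chL (chPhi a)

/-- Action of `Ψ̂ = Φ ∘ L⁻¹ [1]` on Chern characters. -/
def chPsiHat (a : Fin 4 → ℝ) : Fin 4 → ℝ := fun i => -(chPhi (chLinv a) i)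

/-- For every `E ∈ D^b(X)` (i.e. for every Chern character vector `a`),
`Im Z(Ψ(E)) = -Im Z(E)` and `Im Z(Ψ̂(E)) = -Im Z(E)`. -/
theorem statement1 (a : Fin 4 → ℝ) :
    ImZ (chPsi a) = -ImZ a ∧ ImZ (chPsiHat a) = -ImZ a := by
  constructor <;> simp [ImZ, chPsi, chPsiHat, chL, chLinv, chPhi] <;> ring
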